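/- Let X be Hermitian on H_A⊗H_B⊗H_C and M(X) = max over unit product vectors of ⟨abc|X|abc⟩. Then for every k ≥ 1, M(X) ≤ λ_max( Π_k^{⊗3} (X ⊗ 1^{⊗(k-1)}) Π_k^{⊗3} ), where X acts on the first copy of each party's space and the identity on the remaining k−1 copies. -/

import Mathlib

open scoped InnerProductSpace BigOperators ComplexConjugate

noncomputable section

variable {dA dB dC : ℕ}

/-- The elementary product tensor `a ⊗ b ⊗ c` in `H_A ⊗ H_B ⊗ H_C`. -/
def prodVec3 (a : EuclideanSpace ℂ (Fin dA)) (b : EuclideanSpace ℂ (Fin dB))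
    (c : EuclideanSpace ℂ (Fin dC)) :
    EuclideanSpace ℂ (Fin dA × Fin dB × Fin dC) :=
  WithLp.toLp 2 (fun p : Fin dA × Fin dB × Fin dC => a p.1 * b p.2.1 * c p.2.2)

/-- The matrix of the symmetric projector `Π_k = (1/k!) ∑_{π ∈ S_k} V_π`
on `(ℂ^d)^{⊗k}`. -/
def symMat (d k : ℕ) : Matrix (Fin k → Fin d) (Fin k → Fin d) ℂ :=
  ((k.factorial : ℂ))⁻¹ •
    ∑ π : Equiv.Perm (Fin k),
      Matrix.of fun f g => if f = (fun j => g (π j)) then (1 : ℂ) else 0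

/-- The matrix of `Π_k ⊗ Π_k ⊗ Π_k` on the `k`-copy tripartite space, with tensor
factors grouped per party. -/
def symMat3 (dA dB dC k : ℕ) :
    Matrix ((Fin k → Fin dA) × (Fin k → Fin dB) × (Fin k → Fin dC))
      ((Fin k → Fin dA) × (Fin k → Fin dB) × (Fin k → Fin dC)) ℂ :=
  Matrix.of fun p q =>
    symMat dA k p.1 q.1 * symMat dB k p.2.1 q.2.1 * symMat dC k p.2.2 q.2.2

/-- The largest value of the Rayleigh quotient of a matrix over unit vectors; for a
Hermitian matrix this is its largest eigenvalue `λ_max`. -/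
def rayleighMax {ι : Type*} [Fintype ι] [DecidableEq ι] (Y : Matrix ι ι ℂ) : ℝ :=
  sSup {r : ℝ | ∃ v : EuclideanSpace ℂ ι, ‖v‖ = 1 ∧
    r = (⟪v, Matrix.toEuclideanLin Y v⟫_ℂ).re}

/-- `X ⊗ 1^{⊗(k-1)}`: the operator `X` acting on the first copy of each party's space
and the identity on the remaining `k-1` copies, with tensor factors grouped per
party. -/
def opFirst (X : Matrix (Fin dA × Fin dB × Fin dC) (Fin dA × Fin dB × Fin dC) ℂ)
    (k : ℕ) (hk : 0 < k) :
    Matrix ((Fin k → Fin dA) × (Fin k → Fin dB) × (Fin k → Fin dC))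
      ((Fin k → Fin dA) × (Fin k → Fin dB) × (Fin k → Fin dC)) ℂ :=
  Matrix.of fun p q =>
    X (p.1 ⟨0, hk⟩, p.2.1 ⟨0, hk⟩, p.2.2 ⟨0, hk⟩)
        (q.1 ⟨0, hk⟩, q.2.1 ⟨0, hk⟩, q.2.2 ⟨0, hk⟩) *
      ∏ j ∈ Finset.univ.erase (⟨0, hk⟩ : Fin k),
        (if p.1 j = q.1 j ∧ p.2.1 j = q.2.1 j ∧ p.2.2 j = q.2.2 j
          then (1 : ℂ) else 0)

/-! ### Auxiliary lemmas -/

open Matrix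
lemma rayleigh_bddAbove {ι : Type*} [Fintype ι] [DecidableEq ι] (Y : Matrix ι ι ℂ) :
    BddAbove {r : ℝ | ∃ v : EuclideanSpace ℂ ι, ‖v‖ = 1 ∧
      r = (⟪v, Matrix.toEuclideanLin Y v⟫_ℂ).re} := by
  set T := LinearMap.toContinuousLinearMap (Matrix.toEuclideanLin Y) with hT
  refine ⟨‖T‖, ?_⟩
  rintro r ⟨v, hv, rfl⟩
  have h1 : Matrix.toEuclideanLin Y v = T v := rfl
  calc (⟪v, Matrix.toEuclideanLin Y v⟫_ℂ).re ≤ ‖⟪v, Matrix.toEuclideanLin Y v⟫_ℂ‖ :=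
        Complex.re_le_norm _
    _ ≤ ‖v‖ * ‖Matrix.toEuclideanLin Y v‖ := norm_inner_le_norm _ _
    _ ≤ ‖v‖ * (‖T‖ * ‖v‖) := by
        rw [h1]; exact mul_le_mul_of_nonneg_left (T.le_opNorm v) (norm_nonneg _)
    _ = ‖T‖ := by rw [hv]; ring

lemma symMat_symm {d k : ℕ} (f g : Fin k → Fin d) : symMat d k f g = symMat d k g f := by
  unfold symMat
  simp only [Matrix.smul_apply, Matrix.sum_apply, Matrix.of_apply, smul_eq_mul]
  congr 1
  rw [← Equiv.sum_comp (Equiv.inv (Equiv.Perm (Fin k)))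
    (fun π => if g = (fun j => f (π j)) then (1:ℂ) else 0)]
  refine Fintype.sum_congr _ _ fun π => ?_
  congr 1
  simp only [eq_iff_iff, Equiv.inv_apply]
  constructor
  · rintro rfl; funext j; simp
  · rintro rfl; funext j; simp

lemma symMat_mulVec {d k : ℕ} (a : Fin d → ℂ) (f : Fin k → Fin d) :
    (symMat d k *ᵥ fun g => ∏ j, a (g j)) f = ∏ j, a (f j) := by
  have hfac : ((k.factorial : ℂ)) ≠ 0 := Nat.cast_ne_zero.mpr (Nat.factorial_ne_zero k)
  simp only [Matrix.mulVec, dotProduct, symMat, Matrix.smul_apply, Matrix.sum_apply,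
    Matrix.of_apply, smul_eq_mul]
  have step1 : ∀ π : Equiv.Perm (Fin k), ∑ g : Fin k → Fin d,
      (k.factorial : ℂ)⁻¹ * ((if f = (fun j => g (π j)) then (1:ℂ) else 0) * ∏ j, a (g j))
        = (k.factorial : ℂ)⁻¹ * ∏ j, a (f j) := by
    intro π
    rw [← Finset.mul_sum]
    congr 1
    have hcond : ∀ g : Fin k → Fin d,
        (f = fun j => g (π j)) ↔ (g = fun j => f (π.symm j)) := by
      intro g
      constructor
      · rintro rfl; funext j; simp
      · rintro rfl; funext j; simp
    calc ∑ g : Fin k → Fin d, (if f = (fun j => g (π j)) then (1:ℂ) else 0) * ∏ j, a (g j)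
        = ∑ g : Fin k → Fin d,
            (if g = (fun j => f (π.symm j)) then (1:ℂ) else 0) * ∏ j, a (g j) := by
          refine Finset.sum_congr rfl fun g _ => ?_
          simp only [hcond g]
      _ = ∏ j, a (f (π.symm j)) := by
          simp only [ite_mul, one_mul, zero_mul, Finset.sum_ite_eq', Finset.mem_univ, if_true]
      _ = ∏ j, a (f j) := Equiv.prod_comp π.symm fun j => a (f j)
  calc ∑ g : Fin k → Fin d, (k.factorial : ℂ)⁻¹ * (∑ π : Equiv.Perm (Fin k),
          if f = (fun j => g (π j)) then (1:ℂ) else 0) * ∏ j, a (g j)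
      = ∑ g : Fin k → Fin d, ∑ π : Equiv.Perm (Fin k),
          (k.factorial : ℂ)⁻¹ * ((if f = (fun j => g (π j)) then (1:ℂ) else 0) * ∏ j, a (g j)) := by
        refine Finset.sum_congr rfl fun g _ => ?_
        rw [mul_assoc, Finset.sum_mul, Finset.mul_sum]
    _ = ∑ π : Equiv.Perm (Fin k), ∑ g : Fin k → Fin d,
          (k.factorial : ℂ)⁻¹ * ((if f = (fun j => g (π j)) then (1:ℂ) else 0) * ∏ j, a (g j)) :=
        Finset.sum_comm
    _ = ∑ _π : Equiv.Perm (Fin k), (k.factorial : ℂ)⁻¹ * ∏ j, a (f j) :=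
        Fintype.sum_congr _ _ step1
    _ = ∏ j, a (f j) := by
        rw [Finset.sum_const, Finset.card_univ, Fintype.card_perm, Fintype.card_fin, nsmul_eq_mul,
          ← mul_assoc, mul_inv_cancel₀ hfac, one_mul]

lemma sum_split1 {ι : Type*} [Fintype ι] [DecidableEq ι] {n : ℕ} (ψ : ι → ℂ)
    (g : Fin (n+1) → ι → ℂ) :
    ∑ q : Fin (n+1) → ι, ψ (q 0) * ∏ j ∈ Finset.univ.erase 0, g j (q j)
      = (∑ α, ψ α) * ∏ j ∈ Finset.univ.erase 0, (∑ α, g j α) := by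
  classical
  set χ : Fin (n+1) → ι → ℂ := fun j => if j = 0 then ψ else g j with hχ
  have h1 : ∀ q : Fin (n+1) → ι,
      ψ (q 0) * ∏ j ∈ Finset.univ.erase 0, g j (q j) = ∏ j, χ j (q j) := by
    intro q
    rw [show ψ (q 0) = χ 0 (q 0) by simp [hχ],
      show (∏ j ∈ Finset.univ.erase 0, g j (q j)) = ∏ j ∈ Finset.univ.erase 0, χ j (q j) from
        Finset.prod_congr rfl fun j hj => by simp [hχ, (Finset.mem_erase.mp hj).1],
      Finset.mul_prod_erase Finset.univ (fun j => χ j (q j)) (Finset.mem_univ 0)]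
  simp only [h1]
  rw [← Fintype.prod_sum (fun j α => χ j α),
    ← Finset.mul_prod_erase Finset.univ (fun j => ∑ α, χ j α) (Finset.mem_univ 0),
    show (∑ α, χ 0 α) = ∑ α, ψ α by simp [hχ],
    show (∏ j ∈ Finset.univ.erase 0, ∑ α, χ j α) = ∏ j ∈ Finset.univ.erase 0, ∑ α, g j α from
      Finset.prod_congr rfl fun j hj => by simp [hχ, (Finset.mem_erase.mp hj).1]]

def tripleEquiv (dA dB dC k : ℕ) :
    ((Fin k → Fin dA) × (Fin k → Fin dB) × (Fin k → Fin dC)) ≃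
      (Fin k → Fin dA × Fin dB × Fin dC) where
  toFun q := fun j => (q.1 j, q.2.1 j, q.2.2 j)
  invFun f := (fun j => (f j).1, fun j => (f j).2.1, fun j => (f j).2.2)
  left_inv _ := rfl
  right_inv _ := rfl

lemma sum_split3 {dA dB dC n : ℕ} (Φ : Fin dA × Fin dB × Fin dC → ℂ)
    (g : Fin (n+1) → Fin dA × Fin dB × Fin dC → ℂ) :
    ∑ q : (Fin (n+1) → Fin dA) × (Fin (n+1) → Fin dB) × (Fin (n+1) → Fin dC),
      Φ (q.1 0, q.2.1 0, q.2.2 0) * ∏ j ∈ Finset.univ.erase 0, g j (q.1 j, q.2.1 j, q.2.2 j)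
    = (∑ y, Φ y) * ∏ j ∈ Finset.univ.erase 0, (∑ y, g j y) := by
  rw [← sum_split1 Φ g]
  exact Fintype.sum_equiv (tripleEquiv dA dB dC (n+1)) _ _ fun q => rfl

lemma sum_triple_mul {ιA ιB ιC : Type*} [Fintype ιA] [Fintype ιB] [Fintype ιC]
    (f : ιA → ℂ) (g : ιB → ℂ) (h : ιC → ℂ) :
    ∑ p : ιA × ιB × ιC, f p.1 * g p.2.1 * h p.2.2
      = (∑ x, f x) * (∑ y, g y) * (∑ z, h z) := by
  rw [Fintype.sum_prod_type]
  simp_rw [Fintype.sum_prod_type, ← Finset.mul_sum, ← Finset.sum_mul, ← Finset.mul_sum]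
  rw [← Finset.sum_mul]

lemma sum_conj_prod {d k : ℕ} (a : Fin d → ℂ)
    (h : ∑ α, (starRingEnd ℂ) (a α) * a α = 1) :
    ∑ f : Fin k → Fin d, (starRingEnd ℂ) (∏ j, a (f j)) * ∏ j, a (f j) = 1 := by
  have h1 : ∀ f : Fin k → Fin d, (starRingEnd ℂ) (∏ j, a (f j)) * ∏ j, a (f j)
      = ∏ j, ((starRingEnd ℂ) (a (f j)) * a (f j)) := by
    intro f; rw [map_prod, ← Finset.prod_mul_distrib]
  simp only [h1]
  rw [← Fintype.sum_pow (fun α => (starRingEnd ℂ) (a α) * a α) k, h, one_pow]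

lemma delta_sum {dA dB dC : ℕ} (x : Fin dA × Fin dB × Fin dC)
    (a : Fin dA → ℂ) (b : Fin dB → ℂ) (c : Fin dC → ℂ) :
    ∑ y : Fin dA × Fin dB × Fin dC,
      (if x.1 = y.1 ∧ x.2.1 = y.2.1 ∧ x.2.2 = y.2.2 then (1:ℂ) else 0)
        * (a y.1 * b y.2.1 * c y.2.2)
    = a x.1 * b x.2.1 * c x.2.2 := by
  have hc : ∀ y : Fin dA × Fin dB × Fin dC,
      (x.1 = y.1 ∧ x.2.1 = y.2.1 ∧ x.2.2 = y.2.2) ↔ y = x := by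
    intro y
    constructor
    · rintro ⟨h1, h2, h3⟩
      exact Prod.ext h1.symm (Prod.ext h2.symm h3.symm)
    · rintro rfl; exact ⟨rfl, rfl, rfl⟩
  simp only [hc, ite_mul, one_mul, zero_mul, Finset.sum_ite_eq', Finset.mem_univ, if_true]

/-- The product vector `a^{⊗k} ⊗ b^{⊗k} ⊗ c^{⊗k}` as a plain function. -/
def prodPow {dA dB dC k : ℕ} (a : Fin dA → ℂ) (b : Fin dB → ℂ) (c : Fin dC → ℂ) :
    ((Fin k → Fin dA) × (Fin k → Fin dB) × (Fin k → Fin dC)) → ℂ :=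
  fun p => (∏ j, a (p.1 j)) * (∏ j, b (p.2.1 j)) * ∏ j, c (p.2.2 j)

lemma symMat3_mulVec_prodPow {dA dB dC k : ℕ} (a : Fin dA → ℂ) (b : Fin dB → ℂ)
    (c : Fin dC → ℂ) :
    (symMat3 dA dB dC k *ᵥ prodPow a b c) = prodPow a b c := by
  funext p
  show ∑ q, symMat3 dA dB dC k p q * prodPow a b c q = _
  calc ∑ q : (Fin k → Fin dA) × (Fin k → Fin dB) × (Fin k → Fin dC),
        symMat3 dA dB dC k p q * prodPow a b c q
      = ∑ q : (Fin k → Fin dA) × (Fin k → Fin dB) × (Fin k → Fin dC),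
          (fun g => symMat dA k p.1 g * ∏ j, a (g j)) q.1
            * (fun g => symMat dB k p.2.1 g * ∏ j, b (g j)) q.2.1
            * (fun g => symMat dC k p.2.2 g * ∏ j, c (g j)) q.2.2 := by
        refine Finset.sum_congr rfl fun q _ => ?_
        simp only [symMat3, Matrix.of_apply, prodPow]
        ring
    _ = (∑ g, symMat dA k p.1 g * ∏ j, a (g j)) * (∑ g, symMat dB k p.2.1 g * ∏ j, b (g j))
          * ∑ g, symMat dC k p.2.2 g * ∏ j, c (g j) :=
        sum_triple_mul (fun g => symMat dA k p.1 g * ∏ j, a (g j))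
          (fun g => symMat dB k p.2.1 g * ∏ j, b (g j))
          (fun g => symMat dC k p.2.2 g * ∏ j, c (g j))
    _ = _ := by
        rw [show (∑ g, symMat dA k p.1 g * ∏ j, a (g j))
            = (symMat dA k *ᵥ fun g => ∏ j, a (g j)) p.1 from rfl,
          show (∑ g, symMat dB k p.2.1 g * ∏ j, b (g j))
            = (symMat dB k *ᵥ fun g => ∏ j, b (g j)) p.2.1 from rfl,
          show (∑ g, symMat dC k p.2.2 g * ∏ j, c (g j))
            = (symMat dC k *ᵥ fun g => ∏ j, c (g j)) p.2.2 from rfl,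
          symMat_mulVec, symMat_mulVec, symMat_mulVec]
        rfl

lemma symMat3_absorb {dA dB dC k : ℕ} (a : Fin dA → ℂ) (b : Fin dB → ℂ) (c : Fin dC → ℂ)
    (w : (Fin k → Fin dA) × (Fin k → Fin dB) × (Fin k → Fin dC) → ℂ) :
    ∑ p, prodPow a b c p * (symMat3 dA dB dC k *ᵥ w) p
      = ∑ p, prodPow a b c p * w p := by
  have hsymm : ∀ p q, symMat3 dA dB dC k p q = symMat3 dA dB dC k q p := by
    intro p q
    simp only [symMat3, Matrix.of_apply, symMat_symm p.1 q.1, symMat_symm p.2.1 q.2.1,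
      symMat_symm p.2.2 q.2.2]
  calc ∑ p, prodPow a b c p * (symMat3 dA dB dC k *ᵥ w) p
      = ∑ p, ∑ q, prodPow a b c p * (symMat3 dA dB dC k p q * w q) := by
        refine Finset.sum_congr rfl fun p _ => ?_
        rw [show (symMat3 dA dB dC k *ᵥ w) p = ∑ q, symMat3 dA dB dC k p q * w q from rfl,
          Finset.mul_sum]
    _ = ∑ q, ∑ p, prodPow a b c p * (symMat3 dA dB dC k p q * w q) := Finset.sum_comm
    _ = ∑ q, (∑ p, symMat3 dA dB dC k q p * prodPow a b c p) * w q := by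
        refine Finset.sum_congr rfl fun q _ => ?_
        rw [Finset.sum_mul]
        refine Finset.sum_congr rfl fun p _ => ?_
        rw [hsymm q p]; ring
    _ = ∑ q, prodPow a b c q * w q := by
        refine Finset.sum_congr rfl fun q _ => ?_
        congr 1
        exact congrFun (symMat3_mulVec_prodPow a b c) q
lemma opFirst_mulVec_prodPow {dA dB dC n : ℕ}
    (X : Matrix (Fin dA × Fin dB × Fin dC) (Fin dA × Fin dB × Fin dC) ℂ)
    (hk : 0 < n + 1) (a : Fin dA → ℂ) (b : Fin dB → ℂ) (c : Fin dC → ℂ)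
    (p : (Fin (n+1) → Fin dA) × (Fin (n+1) → Fin dB) × (Fin (n+1) → Fin dC)) :
    (opFirst X (n+1) hk *ᵥ prodPow a b c) p
      = (∑ y, X (p.1 0, p.2.1 0, p.2.2 0) y * (a y.1 * b y.2.1 * c y.2.2))
        * ∏ j ∈ Finset.univ.erase (0 : Fin (n+1)),
            (a (p.1 j) * b (p.2.1 j) * c (p.2.2 j)) := by
  have h0 : (⟨0, hk⟩ : Fin (n+1)) = 0 := rfl
  show (∑ q, opFirst X (n+1) hk p q * prodPow a b c q) = _
  have hterm : ∀ q : (Fin (n+1) → Fin dA) × (Fin (n+1) → Fin dB) × (Fin (n+1) → Fin dC),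
      opFirst X (n+1) hk p q * prodPow a b c q
      = (fun y : Fin dA × Fin dB × Fin dC =>
            X (p.1 0, p.2.1 0, p.2.2 0) y * (a y.1 * b y.2.1 * c y.2.2))
          (q.1 0, q.2.1 0, q.2.2 0)
        * ∏ j ∈ Finset.univ.erase (0 : Fin (n+1)),
            (fun y : Fin dA × Fin dB × Fin dC =>
              (if p.1 j = y.1 ∧ p.2.1 j = y.2.1 ∧ p.2.2 j = y.2.2 then (1:ℂ) else 0)
                * (a y.1 * b y.2.1 * c y.2.2)) (q.1 j, q.2.1 j, q.2.2 j) := by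
    intro q
    simp only [opFirst, Matrix.of_apply, prodPow, h0]
    rw [← Finset.mul_prod_erase Finset.univ (fun j => a (q.1 j)) (Finset.mem_univ 0),
      ← Finset.mul_prod_erase Finset.univ (fun j => b (q.2.1 j)) (Finset.mem_univ 0),
      ← Finset.mul_prod_erase Finset.univ (fun j => c (q.2.2 j)) (Finset.mem_univ 0)]
    simp only [Finset.prod_mul_distrib]
    ring
  rw [Fintype.sum_congr _ _ hterm,
    sum_split3 (fun y => X (p.1 0, p.2.1 0, p.2.2 0) y * (a y.1 * b y.2.1 * c y.2.2))
      (fun j y => (if p.1 j = y.1 ∧ p.2.1 j = y.2.1 ∧ p.2.2 j = y.2.2 then (1:ℂ) else 0)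
        * (a y.1 * b y.2.1 * c y.2.2))]
  congr 1
  exact Finset.prod_congr rfl fun j _ => delta_sum (p.1 j, p.2.1 j, p.2.2 j) a b c

/-- The product vector as an element of the Euclidean space. -/
def prodPowE {dA dB dC k : ℕ} (a : Fin dA → ℂ) (b : Fin dB → ℂ) (c : Fin dC → ℂ) :
    EuclideanSpace ℂ ((Fin k → Fin dA) × (Fin k → Fin dB) × (Fin k → Fin dC)) :=
  WithLp.toLp 2 (prodPow a b c)

lemma prodPow_norm {dA dB dC k : ℕ} (a : Fin dA → ℂ) (b : Fin dB → ℂ) (c : Fin dC → ℂ)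
    (hA : ∑ α, (starRingEnd ℂ) (a α) * a α = 1)
    (hB : ∑ α, (starRingEnd ℂ) (b α) * b α = 1)
    (hC : ∑ α, (starRingEnd ℂ) (c α) * c α = 1) :
    ‖(prodPowE (k := k) a b c)‖ = 1 := by
  have h2 : ⟪prodPowE (k := k) a b c, prodPowE (k := k) a b c⟫_ℂ = 1 := by
    rw [PiLp.inner_apply]
    simp only [RCLike.inner_apply']
    show ∑ p : (Fin k → Fin dA) × (Fin k → Fin dB) × (Fin k → Fin dC),
      (starRingEnd ℂ) (prodPow a b c p) * prodPow a b c p = 1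
    calc ∑ p : (Fin k → Fin dA) × (Fin k → Fin dB) × (Fin k → Fin dC),
          (starRingEnd ℂ) (prodPow a b c p) * prodPow a b c p
        = ∑ p : (Fin k → Fin dA) × (Fin k → Fin dB) × (Fin k → Fin dC),
            (fun f : Fin k → Fin dA => (starRingEnd ℂ) (∏ j, a (f j)) * ∏ j, a (f j)) p.1
              * (fun f : Fin k → Fin dB => (starRingEnd ℂ) (∏ j, b (f j)) * ∏ j, b (f j)) p.2.1
              * (fun f : Fin k → Fin dC => (starRingEnd ℂ) (∏ j, c (f j)) * ∏ j, c (f j)) p.2.2 := by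
          refine Finset.sum_congr rfl fun p _ => ?_
          show (starRingEnd ℂ) (prodPow a b c p) * prodPow a b c p = _
          simp only [prodPow]
          rw [_root_.map_mul, _root_.map_mul]
          ring
      _ = (∑ f : Fin k → Fin dA, (starRingEnd ℂ) (∏ j, a (f j)) * ∏ j, a (f j))
            * (∑ f : Fin k → Fin dB, (starRingEnd ℂ) (∏ j, b (f j)) * ∏ j, b (f j))
            * ∑ f : Fin k → Fin dC, (starRingEnd ℂ) (∏ j, c (f j)) * ∏ j, c (f j) :=
          sum_triple_mul (fun f : Fin k → Fin dA => (starRingEnd ℂ) (∏ j, a (f j)) * ∏ j, a (f j))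
            (fun f : Fin k → Fin dB => (starRingEnd ℂ) (∏ j, b (f j)) * ∏ j, b (f j))
            (fun f : Fin k → Fin dC => (starRingEnd ℂ) (∏ j, c (f j)) * ∏ j, c (f j))
      _ = 1 := by
          rw [sum_conj_prod a hA, sum_conj_prod b hB, sum_conj_prod c hC]; norm_num
  have h4 := inner_self_eq_norm_sq (𝕜 := ℂ) (prodPowE (k := k) a b c)
  rw [h2] at h4
  have h5 : ‖prodPowE (k := k) a b c‖ ^ 2 = 1 := by
    rw [← h4]
    norm_num
  nlinarith [norm_nonneg (prodPowE (k := k) a b c)]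

lemma prodPow_inner {dA dB dC n : ℕ}
    (X : Matrix (Fin dA × Fin dB × Fin dC) (Fin dA × Fin dB × Fin dC) ℂ)
    (hk : 0 < n + 1) (a : Fin dA → ℂ) (b : Fin dB → ℂ) (c : Fin dC → ℂ)
    (hA : ∑ α, (starRingEnd ℂ) (a α) * a α = 1)
    (hB : ∑ α, (starRingEnd ℂ) (b α) * b α = 1)
    (hC : ∑ α, (starRingEnd ℂ) (c α) * c α = 1) :
    ⟪prodPowE (k := n+1) a b c,
      Matrix.toEuclideanLin
        (symMat3 dA dB dC (n+1) * opFirst X (n+1) hk * symMat3 dA dB dC (n+1))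
        (prodPowE (k := n+1) a b c)⟫_ℂ
    = ∑ y : Fin dA × Fin dB × Fin dC,
        (starRingEnd ℂ) (a y.1 * b y.2.1 * c y.2.2)
          * ∑ z, X y z * (a z.1 * b z.2.1 * c z.2.2) := by
  have hmv : (symMat3 dA dB dC (n+1) * opFirst X (n+1) hk * symMat3 dA dB dC (n+1))
      *ᵥ prodPow a b c
      = symMat3 dA dB dC (n+1) *ᵥ (opFirst X (n+1) hk *ᵥ prodPow a b c) := by
    rw [← Matrix.mulVec_mulVec, ← Matrix.mulVec_mulVec, symMat3_mulVec_prodPow]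
  have hconj : ∀ p : (Fin (n+1) → Fin dA) × (Fin (n+1) → Fin dB) × (Fin (n+1) → Fin dC),
      (starRingEnd ℂ) (prodPow a b c p)
      = prodPow (fun α => (starRingEnd ℂ) (a α)) (fun α => (starRingEnd ℂ) (b α))
          (fun α => (starRingEnd ℂ) (c α)) p := by
    intro p
    simp only [prodPow]
    rw [_root_.map_mul, _root_.map_mul, map_prod, map_prod, map_prod]
  trans (∑ p : (Fin (n+1) → Fin dA) × (Fin (n+1) → Fin dB) × (Fin (n+1) → Fin dC),
      (starRingEnd ℂ) (prodPow a b c p)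
      * (((symMat3 dA dB dC (n+1) * opFirst X (n+1) hk * symMat3 dA dB dC (n+1))
          *ᵥ prodPow a b c) p))
  · rw [PiLp.inner_apply]
    exact Finset.sum_congr rfl fun p _ => by rw [RCLike.inner_apply']; rfl
  calc ∑ p : (Fin (n+1) → Fin dA) × (Fin (n+1) → Fin dB) × (Fin (n+1) → Fin dC),
          (starRingEnd ℂ) (prodPow a b c p)
          * (((symMat3 dA dB dC (n+1) * opFirst X (n+1) hk * symMat3 dA dB dC (n+1))
              *ᵥ prodPow a b c) p)
      = ∑ p : (Fin (n+1) → Fin dA) × (Fin (n+1) → Fin dB) × (Fin (n+1) → Fin dC), prodPow (fun α => (starRingEnd ℂ) (a α)) (fun α => (starRingEnd ℂ) (b α))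
            (fun α => (starRingEnd ℂ) (c α)) p
          * ((symMat3 dA dB dC (n+1) *ᵥ (opFirst X (n+1) hk *ᵥ prodPow a b c)) p) := by
        rw [hmv]
        exact Finset.sum_congr rfl fun p _ => by rw [hconj p]
    _ = ∑ p : (Fin (n+1) → Fin dA) × (Fin (n+1) → Fin dB) × (Fin (n+1) → Fin dC),
          prodPow (fun α => (starRingEnd ℂ) (a α)) (fun α => (starRingEnd ℂ) (b α))
            (fun α => (starRingEnd ℂ) (c α)) p
          * ((opFirst X (n+1) hk *ᵥ prodPow a b c) p) :=
        symMat3_absorb _ _ _ _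
    _ = ∑ p : (Fin (n+1) → Fin dA) × (Fin (n+1) → Fin dB) × (Fin (n+1) → Fin dC),
          (fun x : Fin dA × Fin dB × Fin dC =>
              (starRingEnd ℂ) (a x.1) * (starRingEnd ℂ) (b x.2.1) * (starRingEnd ℂ) (c x.2.2)
                * ∑ z, X x z * (a z.1 * b z.2.1 * c z.2.2)) (p.1 0, p.2.1 0, p.2.2 0)
            * ∏ j ∈ Finset.univ.erase (0 : Fin (n+1)),
                (fun y : Fin dA × Fin dB × Fin dC =>
                  ((starRingEnd ℂ) (a y.1) * a y.1) * ((starRingEnd ℂ) (b y.2.1) * b y.2.1)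
                    * ((starRingEnd ℂ) (c y.2.2) * c y.2.2)) (p.1 j, p.2.1 j, p.2.2 j) := by
        refine Finset.sum_congr rfl fun p _ => ?_
        rw [opFirst_mulVec_prodPow X hk a b c p]
        simp only [prodPow]
        rw [← Finset.mul_prod_erase Finset.univ (fun j => (starRingEnd ℂ) (a (p.1 j)))
            (Finset.mem_univ 0),
          ← Finset.mul_prod_erase Finset.univ (fun j => (starRingEnd ℂ) (b (p.2.1 j)))
            (Finset.mem_univ 0),
          ← Finset.mul_prod_erase Finset.univ (fun j => (starRingEnd ℂ) (c (p.2.2 j)))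
            (Finset.mem_univ 0)]
        simp only [Finset.prod_mul_distrib]
        ring
    _ = (∑ y : Fin dA × Fin dB × Fin dC,
            (starRingEnd ℂ) (a y.1) * (starRingEnd ℂ) (b y.2.1) * (starRingEnd ℂ) (c y.2.2)
              * ∑ z, X y z * (a z.1 * b z.2.1 * c z.2.2))
          * ∏ j ∈ Finset.univ.erase (0 : Fin (n+1)),
              (∑ y : Fin dA × Fin dB × Fin dC,
                ((starRingEnd ℂ) (a y.1) * a y.1) * ((starRingEnd ℂ) (b y.2.1) * b y.2.1)
                  * ((starRingEnd ℂ) (c y.2.2) * c y.2.2)) :=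
        sum_split3 (fun x : Fin dA × Fin dB × Fin dC =>
            (starRingEnd ℂ) (a x.1) * (starRingEnd ℂ) (b x.2.1) * (starRingEnd ℂ) (c x.2.2)
              * ∑ z, X x z * (a z.1 * b z.2.1 * c z.2.2))
          (fun (_ : Fin (n+1)) (y : Fin dA × Fin dB × Fin dC) =>
            ((starRingEnd ℂ) (a y.1) * a y.1) * ((starRingEnd ℂ) (b y.2.1) * b y.2.1)
              * ((starRingEnd ℂ) (c y.2.2) * c y.2.2))
    _ = ∑ y : Fin dA × Fin dB × Fin dC,
          (starRingEnd ℂ) (a y.1 * b y.2.1 * c y.2.2)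
            * ∑ z, X y z * (a z.1 * b z.2.1 * c z.2.2) := by
        rw [show (∑ y : Fin dA × Fin dB × Fin dC,
            ((starRingEnd ℂ) (a y.1) * a y.1) * ((starRingEnd ℂ) (b y.2.1) * b y.2.1)
              * ((starRingEnd ℂ) (c y.2.2) * c y.2.2)) = 1 by
            rw [sum_triple_mul (fun x => (starRingEnd ℂ) (a x) * a x)
              (fun x => (starRingEnd ℂ) (b x) * b x) (fun x => (starRingEnd ℂ) (c x) * c x),
              hA, hB, hC]
            norm_num]
        rw [Finset.prod_const_one, mul_one]
        refine Finset.sum_congr rfl fun y _ => ?_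
        rw [_root_.map_mul, _root_.map_mul]


/-- For a Hermitian `X` with maximal separable expectation `M(X)`, one has
`M(X) ≤ λ_max(Π_k^{⊗3} (X ⊗ 1^{⊗(k-1)}) Π_k^{⊗3})` for every `k ≥ 1`. -/
theorem sepRange_le_rayleighMax_opFirst
    (X : Matrix (Fin dA × Fin dB × Fin dC) (Fin dA × Fin dB × Fin dC) ℂ)
    (hX : X.IsHermitian) (M : ℝ)
    (hM : IsGreatest {r : ℝ | ∃ (a : EuclideanSpace ℂ (Fin dA))
        (b : EuclideanSpace ℂ (Fin dB)) (c : EuclideanSpace ℂ (Fin dC)),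
        ‖a‖ = 1 ∧ ‖b‖ = 1 ∧ ‖c‖ = 1 ∧
        r = (⟪prodVec3 a b c, Matrix.toEuclideanLin X (prodVec3 a b c)⟫_ℂ).re} M)
    (k : ℕ) (hk : 0 < k) :
    M ≤ rayleighMax
      (symMat3 dA dB dC k * opFirst X k hk * symMat3 dA dB dC k) := by
  obtain ⟨⟨a, b, c, ha, hb, hc, hMeq⟩, -⟩ := hM
  obtain ⟨n, rfl⟩ := Nat.exists_eq_succ_of_ne_zero hk.ne'
  have hA : ∑ α, (starRingEnd ℂ) (a α) * a α = 1 := by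
    have h := inner_self_eq_norm_sq_to_K (𝕜 := ℂ) a
    rw [ha, RCLike.ofReal_one, one_pow, PiLp.inner_apply] at h
    rw [show (∑ α, (starRingEnd ℂ) (a α) * a α) = ∑ α, ⟪a α, a α⟫_ℂ from
      Finset.sum_congr rfl fun α _ => by rw [RCLike.inner_apply']]
    exact h
  have hB : ∑ α, (starRingEnd ℂ) (b α) * b α = 1 := by
    have h := inner_self_eq_norm_sq_to_K (𝕜 := ℂ) b
    rw [hb, RCLike.ofReal_one, one_pow, PiLp.inner_apply] at h
    rw [show (∑ α, (starRingEnd ℂ) (b α) * b α) = ∑ α, ⟪b α, b α⟫_ℂ from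
      Finset.sum_congr rfl fun α _ => by rw [RCLike.inner_apply']]
    exact h
  have hC : ∑ α, (starRingEnd ℂ) (c α) * c α = 1 := by
    have h := inner_self_eq_norm_sq_to_K (𝕜 := ℂ) c
    rw [hc, RCLike.ofReal_one, one_pow, PiLp.inner_apply] at h
    rw [show (∑ α, (starRingEnd ℂ) (c α) * c α) = ∑ α, ⟪c α, c α⟫_ℂ from
      Finset.sum_congr rfl fun α _ => by rw [RCLike.inner_apply']]
    exact h
  have hP : ⟪prodVec3 a b c, Matrix.toEuclideanLin X (prodVec3 a b c)⟫_ℂ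
      = ∑ y : Fin dA × Fin dB × Fin dC,
          (starRingEnd ℂ) (a y.1 * b y.2.1 * c y.2.2)
            * ∑ z, X y z * (a z.1 * b z.2.1 * c z.2.2) := by
    rw [PiLp.inner_apply]
    exact Finset.sum_congr rfl fun y _ => by rw [RCLike.inner_apply']; rfl
  refine le_csSup (rayleigh_bddAbove _) ?_
  refine ⟨prodPowE (k := n+1) a b c, prodPow_norm a b c hA hB hC, ?_⟩
  rw [hMeq]
  congr 1
  rw [hP, prodPow_inner X hk a b c hA hB hC]

end
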